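/- Local Lipschitz continuity of the signature: for every k ≥ 1 there exists a constant C_k > 0 such that for all N ≥ 1, all L > 0, and all Lipschitz paths Γ₁, Γ₂ : [0,1] → ℝ^N whose 1-variations satisfy |Γ₁|₁ ≤ L and |Γ₂|₁ ≤ L, one has ( Σ_{I} (S^I(Γ₁) − S^I(Γ₂))² )^{1/2} ≤ C_k · L^{k−1} · |Γ₁ − Γ₂|₁, where the sum runs over all multi-indices I of length k with entries in {1, …, N}. -/

import Mathlib

/-!
Write the level-`k` signature as the integral over `Δ^k` of the elementary tensor
`Γ'(t₁) ⊗ ⋯ ⊗ Γ'(t_k)`, whose Euclidean norm is `∏ ‖Γ'(t_m)‖`. Telescoping,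
`x₁ ⊗ ⋯ ⊗ x_k - y₁ ⊗ ⋯ ⊗ y_k = ∑ᵢ y₁ ⊗ ⋯ ⊗ y_{i-1} ⊗ (xᵢ - yᵢ) ⊗ x_{i+1} ⊗ ⋯ ⊗ x_k`,
so after enlarging `Δ^k` to the cube `[0,1]^k` and applying Fubini each of the `k` terms is at
most `L^(k-1) · ∫ ‖Γ₁' - Γ₂'‖`, its other factors integrating to `∫ ‖Γ₁'‖ ≤ L` or `∫ ‖Γ₂'‖ ≤ L`.
Finally `∫₀¹ ‖f'‖ ≤ |f|₁` for every path of bounded variation: `‖f'‖` is dominated a.e. by the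
derivative of the monotone function `t ↦ |f|_{1,[0,t]}`, and the derivative of a monotone function
integrates to at most its increment.
-/

open MeasureTheory

noncomputable section

/-- The simplex `Δ^k = {(t₁, …, t_k) : 0 ≤ t₁ ≤ ⋯ ≤ t_k ≤ 1}` as a subset of `ℝ^k`. -/
def simplexSet (k : ℕ) : Set (Fin k → ℝ) :=
  {t | (∀ i j : Fin k, i ≤ j → t i ≤ t j) ∧ ∀ i, 0 ≤ t i ∧ t i ≤ 1}

/-- The iterated integral (path signature term) of a path `Γ` with respect to a multi-index
`I = (i₁, …, i_k)`: the Lebesgue integral over `Δ^k` of `γ_{i₁}'(t₁) ⋯ γ_{i_k}'(t_k)`. -/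
def sig {N : ℕ} (Γ : ℝ → EuclideanSpace ℝ (Fin N)) {k : ℕ} (I : Fin k → Fin N) : ℝ :=
  ∫ t in simplexSet k, ∏ m : Fin k, deriv (fun s => Γ s (I m)) (t m)

/-- The 1-variation of a path `Γ : [0,1] → ℝ^N`: the supremum over finite partitions
`0 = t₀ < t₁ < ⋯ < t_n = 1` of `Σᵢ ‖Γ(tᵢ) − Γ(tᵢ₋₁)‖`, with the Euclidean norm on `ℝ^N`.
Here it is expressed via Mathlib's `eVariationOn` (valued in `ℝ≥0∞`). -/
def oneVariation {N : ℕ} (Γ : ℝ → EuclideanSpace ℝ (Fin N)) : ENNReal :=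
  eVariationOn Γ (Set.Icc 0 1)

open Set Topology

section Variation

variable {E : Type*} [NormedAddCommGroup E] [NormedSpace ℝ E]

theorem norm_le_of_hasDerivAt_of_norm_sub_le {f : ℝ → E} {f' : E} {V : ℝ → ℝ} {v t : ℝ}
    (hf : HasDerivAt f f' t) (hV : HasDerivAt V v t)
    (hle : ∀ᶠ s in 𝓝[>] t, ‖f s - f t‖ ≤ V s - V t) : ‖f'‖ ≤ v := by
  refine le_of_tendsto_of_tendsto (hf.tendsto_slope.mono_left (nhdsGT_le_nhdsNE t)).norm
    (hV.tendsto_slope.mono_left (nhdsGT_le_nhdsNE t)) ?_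
  filter_upwards [hle, self_mem_nhdsWithin] with s hs (hts : t < s)
  have hpos : 0 < s - t := sub_pos.2 hts
  rw [slope_def_module, slope_def_field, norm_smul, Real.norm_of_nonneg (inv_nonneg.2 hpos.le),
    inv_mul_eq_div]
  exact div_le_div_of_nonneg_right hs hpos.le

theorem MonotoneOn.integrableOn_deriv {g : ℝ → ℝ} {a b : ℝ} (hg : MonotoneOn g (Icc a b)) :
    IntegrableOn (deriv g) (Icc a b) := by
  rcases lt_or_ge b a with hba | hab
  · simp [Icc_eq_empty_of_lt hba]
  rw [← uIcc_of_le hab] at hg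
  exact (intervalIntegrable_iff_integrableOn_Icc_of_le hab).1 hg.intervalIntegrable_deriv

theorem MonotoneOn.setIntegral_deriv_le {g : ℝ → ℝ} {a b : ℝ} (hg : MonotoneOn g (Icc a b))
    (hab : a ≤ b) : ∫ t in Icc a b, deriv g t ≤ g b - g a := by
  have hgab : g a ≤ g b := hg (left_mem_Icc.2 hab) (right_mem_Icc.2 hab) hab
  have := (uIcc_of_le hab ▸ hg : MonotoneOn g (uIcc a b)).intervalIntegral_deriv_mem_uIcc
  rw [uIcc_of_le (sub_nonneg.2 hgab), intervalIntegral.integral_of_le hab] at this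
  rw [integral_Icc_eq_integral_Ioc]
  exact this.2

variable [FiniteDimensional ℝ E] {f : ℝ → E} {a b : ℝ}

theorem BoundedVariationOn.ae_restrict_differentiableAt (hf : BoundedVariationOn f (Icc a b)) :
    ∀ᵐ t ∂volume.restrict (Icc a b), DifferentiableAt ℝ f t := by
  rcases lt_or_ge b a with hba | hab
  · simp [Icc_eq_empty_of_lt hba]
  rw [← uIcc_of_le hab] at hf ⊢
  exact (ae_restrict_iff' measurableSet_uIcc).2 hf.ae_differentiableAt_of_mem_uIcc

theorem BoundedVariationOn.ae_norm_deriv_le_deriv_variationOnFromTo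
    (hf : BoundedVariationOn f (Icc a b)) :
    ∀ᵐ t ∂volume.restrict (Icc a b),
      ‖deriv f t‖ ≤ deriv (variationOnFromTo f (Icc a b) a) t := by
  rcases lt_or_ge b a with hba | hab
  · simp [Icc_eq_empty_of_lt hba]
  set V := variationOnFromTo f (Icc a b) a
  have ha : a ∈ Icc a b := left_mem_Icc.2 hab
  have hV : MonotoneOn V (Icc a b) := variationOnFromTo.monotoneOn hf.locallyBoundedVariationOn ha
  have hVbv : BoundedVariationOn V (Icc a b) := by
    have := hV.eVariationOn_eq ha (right_mem_Icc.2 hab)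
    rw [inter_self] at this
    exact this.trans_ne ENNReal.ofReal_ne_top
  have hsub : ∀ s ∈ Icc a b, ∀ u ∈ Icc a b, s ≤ u → ‖f u - f s‖ ≤ V u - V s := by
    intro s hs u hu hsu
    rw [variationOnFromTo.sub_right hf.locallyBoundedVariationOn ha hu hs,
      variationOnFromTo.eq_of_le _ _ hsu, ← dist_eq_norm, dist_comm, dist_edist]
    exact ENNReal.toReal_mono (hf.locallyBoundedVariationOn s u hs hu)
      (eVariationOn.edist_le f ⟨hs, le_rfl, hsu⟩ ⟨hu, hsu, le_rfl⟩)
  filter_upwards [hf.ae_restrict_differentiableAt, hVbv.ae_restrict_differentiableAt,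
    ae_restrict_mem measurableSet_Icc, ae_restrict_of_ae (Measure.ae_ne volume b)]
    with t hft hVt ht htb
  refine norm_le_of_hasDerivAt_of_norm_sub_le hft.hasDerivAt hVt.hasDerivAt ?_
  filter_upwards [Ioo_mem_nhdsGT (lt_of_le_of_ne ht.2 htb)] with u hu
  exact hsub t ht u ⟨ht.1.trans hu.1.le, hu.2.le⟩ hu.1.le

variable [MeasurableSpace E] [BorelSpace E]

theorem BoundedVariationOn.integrableOn_deriv (hf : BoundedVariationOn f (Icc a b)) :
    IntegrableOn (deriv f) (Icc a b) := by
  rcases lt_or_ge b a with hba | hab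
  · simp [Icc_eq_empty_of_lt hba]
  exact (variationOnFromTo.monotoneOn hf.locallyBoundedVariationOn
    (left_mem_Icc.2 hab)).integrableOn_deriv.mono' (measurable_deriv f).aestronglyMeasurable
    hf.ae_norm_deriv_le_deriv_variationOnFromTo

theorem BoundedVariationOn.setIntegral_norm_deriv_le (hf : BoundedVariationOn f (Icc a b)) :
    ∫ t in Icc a b, ‖deriv f t‖ ≤ (eVariationOn f (Icc a b)).toReal := by
  rcases lt_or_ge b a with hba | hab
  · simp [Icc_eq_empty_of_lt hba]
  have hV := variationOnFromTo.monotoneOn hf.locallyBoundedVariationOn (left_mem_Icc.2 hab)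
  calc ∫ t in Icc a b, ‖deriv f t‖
      ≤ ∫ t in Icc a b, deriv (variationOnFromTo f (Icc a b) a) t :=
        integral_mono_ae hf.integrableOn_deriv.norm hV.integrableOn_deriv
          hf.ae_norm_deriv_le_deriv_variationOnFromTo
    _ ≤ variationOnFromTo f (Icc a b) a b - variationOnFromTo f (Icc a b) a a :=
        hV.setIntegral_deriv_le hab
    _ = (eVariationOn f (Icc a b)).toReal := by
        rw [variationOnFromTo.self, sub_zero, variationOnFromTo.eq_of_le _ _ hab, inter_self]

end Variation

section TensorProd

variable {κ ι : Type*} [Fintype κ]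

/-- `x₁ ⊗ ⋯ ⊗ x_k`, with `(ℝ^ι)^{⊗κ}` identified with `ℝ^(κ → ι)`. -/
def tensorProd (x : κ → EuclideanSpace ℝ ι) : EuclideanSpace ℝ (κ → ι) :=
  WithLp.toLp 2 fun I => ∏ m, x m (I m)

@[simp]
theorem tensorProd_apply (x : κ → EuclideanSpace ℝ ι) (I : κ → ι) :
    tensorProd x I = ∏ m, x m (I m) :=
  rfl

theorem norm_tensorProd [Fintype ι] [DecidableEq κ] (x : κ → EuclideanSpace ℝ ι) :
    ‖tensorProd x‖ = ∏ m, ‖x m‖ := by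
  have hsq : ‖tensorProd x‖ ^ 2 = (∏ m, ‖x m‖) ^ 2 := by
    simp only [EuclideanSpace.norm_sq_eq, ← Finset.prod_pow, tensorProd_apply, norm_prod,
      Fintype.prod_sum]
  exact (sq_eq_sq₀ (norm_nonneg _) (by positivity)).1 hsq

theorem continuous_tensorProd :
    Continuous (tensorProd : (κ → EuclideanSpace ℝ ι) → EuclideanSpace ℝ (κ → ι)) := by
  unfold tensorProd
  fun_prop

theorem prod_sub_prod_eq_sum_prod_ite {R : Type*} [CommRing R] [LinearOrder κ] (a b : κ → R) :
    ∏ j, a j - ∏ j, b j = ∑ i, ∏ j, if j < i then b j else if j = i then a j - b j else a j := by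
  have h := Finset.prod_sub_ordered Finset.univ a fun j => a j - b j
  simp only [sub_sub_cancel] at h
  rw [h, sub_sub_cancel]
  refine Finset.sum_congr rfl fun i _ => ?_
  rw [Finset.prod_ite, Finset.prod_ite, Finset.filter_filter, Finset.filter_filter]
  have hi : Finset.univ.filter (fun j => ¬j < i ∧ j = i) = {i} := by
    ext j
    simp only [Finset.mem_filter, Finset.mem_univ, true_and, Finset.mem_singleton]
    exact ⟨And.right, fun h => ⟨h.not_lt, h⟩⟩
  have hgt : Finset.univ.filter (fun j => ¬j < i ∧ ¬j = i) = Finset.univ.filter (i < ·) := by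
    ext j
    simp only [Finset.mem_filter, Finset.mem_univ, true_and, not_lt]
    exact ⟨fun h => lt_of_le_of_ne h.1 (Ne.symm h.2), fun h => ⟨h.le, h.ne'⟩⟩
  rw [hi, hgt, Finset.prod_singleton]
  ring

theorem tensorProd_sub_tensorProd [LinearOrder κ] (x y : κ → EuclideanSpace ℝ ι) :
    tensorProd x - tensorProd y =
      ∑ i, tensorProd fun j => if j < i then y j else if j = i then x j - y j else x j := by
  ext I
  simp only [PiLp.sub_apply, tensorProd_apply, WithLp.ofLp_sum, Finset.sum_apply,
    prod_sub_prod_eq_sum_prod_ite]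
  refine Finset.sum_congr rfl fun i _ => Finset.prod_congr rfl fun j _ => ?_
  split_ifs <;> simp

theorem norm_tensorProd_sub_tensorProd_le [Fintype ι] [LinearOrder κ]
    (x y : κ → EuclideanSpace ℝ ι) :
    ‖tensorProd x - tensorProd y‖ ≤
      ∑ i, ∏ j, if j < i then ‖y j‖ else if j = i then ‖x j - y j‖ else ‖x j‖ := by
  rw [tensorProd_sub_tensorProd]
  refine (norm_sum_le _ _).trans_eq (Finset.sum_congr rfl fun i _ => ?_)
  simp only [norm_tensorProd, apply_ite norm]

end TensorProd

section CubeIntegrals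

variable {κ ι : Type*} [Fintype κ]

theorem volume_restrict_pi_Icc (a b : ℝ) :
    (volume : Measure (κ → ℝ)).restrict (univ.pi fun _ => Icc a b) =
      Measure.pi fun _ => volume.restrict (Icc a b) := by
  rw [volume_pi, Measure.restrict_pi_pi]

theorem ae_restrict_pi_Icc_of_ae {p : ℝ → Prop} {a b : ℝ}
    (h : ∀ᵐ s ∂volume.restrict (Icc a b), p s) :
    ∀ᵐ t ∂(volume : Measure (κ → ℝ)).restrict (univ.pi fun _ => Icc a b), ∀ m, p (t m) := by
  rw [volume_restrict_pi_Icc]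
  exact ae_all_iff.2 fun m => Measure.tendsto_eval_ae_ae.eventually h

theorem integrableOn_pi_Icc_prod {g : κ → ℝ → ℝ} {a b : ℝ}
    (hg : ∀ j, IntegrableOn (g j) (Icc a b)) :
    IntegrableOn (fun t : κ → ℝ => ∏ j, g j (t j)) (univ.pi fun _ => Icc a b) := by
  rw [IntegrableOn, volume_restrict_pi_Icc]
  exact Integrable.fintype_prod hg

theorem setIntegral_prod_le_prod_setIntegral {g : κ → ℝ → ℝ} {a b : ℝ} {S : Set (κ → ℝ)}
    (hS : S ⊆ univ.pi fun _ => Icc a b) (hg : ∀ j, IntegrableOn (g j) (Icc a b))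
    (hg₀ : ∀ j s, 0 ≤ g j s) :
    ∫ t in S, ∏ j, g j (t j) ≤ ∏ j, ∫ s in Icc a b, g j s := by
  calc ∫ t in S, ∏ j, g j (t j) ≤ ∫ t in univ.pi fun _ => Icc a b, ∏ j, g j (t j) :=
        setIntegral_mono_set (integrableOn_pi_Icc_prod hg)
          (ae_of_all _ fun t => Finset.prod_nonneg fun j _ => hg₀ j (t j)) hS.eventuallyLE
    _ = ∏ j, ∫ s in Icc a b, g j s := by
        rw [volume_restrict_pi_Icc]
        exact integral_fintype_prod_eq_prod _

theorem integrableOn_tensorProd_comp [Fintype ι] [DecidableEq κ] {x : ℝ → EuclideanSpace ℝ ι}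
    {a b : ℝ} (hxm : Measurable x) (hx : IntegrableOn x (Icc a b)) :
    IntegrableOn (fun t : κ → ℝ => tensorProd fun m => x (t m)) (univ.pi fun _ => Icc a b) :=
  (integrableOn_pi_Icc_prod fun _ => hx.norm).mono'
    (continuous_tensorProd.measurable.comp
      (measurable_pi_lambda _ fun m => hxm.comp (measurable_pi_apply m))).aestronglyMeasurable
    (ae_of_all _ fun _ => (norm_tensorProd _).le)

theorem prod_le_mul_pow_of_le_ite [DecidableEq κ] {c : κ → ℝ} {i : κ} {D L : ℝ}
    (hc : ∀ j, 0 ≤ c j) (hle : ∀ j, c j ≤ if j = i then D else L) :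
    ∏ j, c j ≤ D * L ^ (Fintype.card κ - 1) := by
  have hi : c i ≤ D := by simpa using hle i
  rw [← Finset.mul_prod_erase _ _ (Finset.mem_univ i)]
  refine mul_le_mul hi ?_ (Finset.prod_nonneg fun j _ => hc j) ((hc i).trans hi)
  calc ∏ j ∈ Finset.univ.erase i, c j ≤ ∏ _j ∈ Finset.univ.erase i, L :=
        Finset.prod_le_prod (fun j _ => hc j) fun j hj => by
          simpa [Finset.ne_of_mem_erase hj] using hle j
    _ = L ^ (Fintype.card κ - 1) := by
        rw [Finset.prod_const, Finset.card_erase_of_mem (Finset.mem_univ i), Finset.card_univ]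

theorem norm_setIntegral_tensorProd_sub_le [Fintype ι] {k : ℕ} {a b : ℝ} {S : Set (Fin k → ℝ)}
    (hS : S ⊆ univ.pi fun _ => Icc a b) {x y : ℝ → EuclideanSpace ℝ ι}
    (hxm : Measurable x) (hym : Measurable y) (hx : IntegrableOn x (Icc a b))
    (hy : IntegrableOn y (Icc a b)) {L D : ℝ} (hxL : ∫ s in Icc a b, ‖x s‖ ≤ L)
    (hyL : ∫ s in Icc a b, ‖y s‖ ≤ L) (hD : ∫ s in Icc a b, ‖x s - y s‖ ≤ D) :
    ‖(∫ t in S, tensorProd fun m => x (t m)) - ∫ t in S, tensorProd fun m => y (t m)‖ ≤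
      k * L ^ (k - 1) * D := by
  set g : Fin k → Fin k → ℝ → ℝ := fun i j s =>
    if j < i then ‖y s‖ else if j = i then ‖x s - y s‖ else ‖x s‖
  have hg : ∀ i j, IntegrableOn (g i j) (Icc a b) ∧ (∀ s, 0 ≤ g i j s) ∧
      ∫ s in Icc a b, g i j s ≤ if j = i then D else L := by
    intro i j
    rcases lt_trichotomy j i with h | rfl | h
    · simpa [g, h, h.ne, hyL, IntegrableOn] using hy.norm
    · simpa [g, hD, IntegrableOn] using (hx.sub hy).norm
    · simpa [g, h.not_gt, h.ne', hxL, IntegrableOn] using hx.norm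
  have hprod_int : ∀ i, IntegrableOn (fun t : Fin k → ℝ => ∏ j, g i j (t j)) S := fun i =>
    (integrableOn_pi_Icc_prod fun j => (hg i j).1).mono_set hS
  calc ‖(∫ t in S, tensorProd fun m => x (t m)) - ∫ t in S, tensorProd fun m => y (t m)‖
      = ‖∫ t in S, ((tensorProd fun m => x (t m)) - tensorProd fun m => y (t m))‖ := by
        rw [integral_sub ((integrableOn_tensorProd_comp hxm hx).mono_set hS)
          ((integrableOn_tensorProd_comp hym hy).mono_set hS)]
    _ ≤ ∫ t in S, ‖(tensorProd fun m => x (t m)) - tensorProd fun m => y (t m)‖ :=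
        norm_integral_le_integral_norm _
    _ ≤ ∫ t in S, ∑ i, ∏ j, g i j (t j) :=
        integral_mono_of_nonneg (ae_of_all _ fun t => norm_nonneg _)
          (integrable_finsetSum _ fun i _ => hprod_int i)
          (ae_of_all _ fun t => norm_tensorProd_sub_tensorProd_le _ _)
    _ = ∑ i, ∫ t in S, ∏ j, g i j (t j) := integral_finsetSum _ fun i _ => hprod_int i
    _ ≤ ∑ i, ∏ j, ∫ s in Icc a b, g i j s := Finset.sum_le_sum fun i _ =>
        setIntegral_prod_le_prod_setIntegral hS (fun j => (hg i j).1) fun j => (hg i j).2.1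
    _ ≤ ∑ _i : Fin k, D * L ^ (k - 1) := Finset.sum_le_sum fun i _ => by
        simpa using prod_le_mul_pow_of_le_ite
          (fun j => setIntegral_nonneg measurableSet_Icc fun s _ => (hg i j).2.1 s)
          fun j => (hg i j).2.2
    _ = k * L ^ (k - 1) * D := by
        rw [Finset.sum_const, Finset.card_univ, Fintype.card_fin, nsmul_eq_mul]
        ring

end CubeIntegrals

section Signature

variable {N : ℕ}

def sigLevel (Γ : ℝ → EuclideanSpace ℝ (Fin N)) (k : ℕ) : EuclideanSpace ℝ (Fin k → Fin N) :=
  WithLp.toLp 2 fun I => sig Γ I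

theorem sqrt_sum_sq_sig_sub_sig (Γ₁ Γ₂ : ℝ → EuclideanSpace ℝ (Fin N)) (k : ℕ) :
    √(∑ I : Fin k → Fin N, (sig Γ₁ I - sig Γ₂ I) ^ 2) = ‖sigLevel Γ₁ k - sigLevel Γ₂ k‖ := by
  simp [EuclideanSpace.norm_eq, sigLevel]

theorem simplexSet_subset_pi_Icc (k : ℕ) : simplexSet k ⊆ univ.pi fun _ => Icc 0 1 :=
  fun _ ht m _ => ht.2 m

theorem deriv_euclidean_apply {ι : Type*} [Fintype ι] {Γ : ℝ → EuclideanSpace ℝ ι} {t : ℝ}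
    (h : DifferentiableAt ℝ Γ t) (i : ι) : deriv (fun s => Γ s i) t = deriv Γ t i :=
  ((EuclideanSpace.proj (𝕜 := ℝ) i).hasFDerivAt.comp_hasDerivAt t h.hasDerivAt).deriv

theorem sigLevel_eq_setIntegral {Γ : ℝ → EuclideanSpace ℝ (Fin N)}
    (hΓ : BoundedVariationOn Γ (Icc 0 1)) (k : ℕ) :
    sigLevel Γ k = ∫ t in simplexSet k, tensorProd fun m => deriv Γ (t m) := by
  have hint := (integrableOn_tensorProd_comp (κ := Fin k) (measurable_deriv Γ)
    hΓ.integrableOn_deriv).mono_set (simplexSet_subset_pi_Icc k)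
  have hdiff : ∀ᵐ t ∂(volume : Measure (Fin k → ℝ)).restrict (simplexSet k),
      ∀ m, DifferentiableAt ℝ Γ (t m) :=
    ae_restrict_of_ae_restrict_of_subset (simplexSet_subset_pi_Icc k)
      (ae_restrict_pi_Icc_of_ae hΓ.ae_restrict_differentiableAt)
  ext I
  change sig Γ I = EuclideanSpace.proj I (∫ t in simplexSet k, tensorProd fun m => deriv Γ (t m))
  rw [← (EuclideanSpace.proj I).integral_comp_comm hint]
  refine integral_congr_ae (hdiff.mono fun t ht => ?_)
  simp [deriv_euclidean_apply (ht _)]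

end Signature

theorem sig_local_lipschitz (k : ℕ) (hk : 1 ≤ k) :
    ∃ C : ℝ, 0 < C ∧
      ∀ (N : ℕ), 1 ≤ N → ∀ (L : ℝ), 0 < L →
        ∀ Γ₁ Γ₂ : ℝ → EuclideanSpace ℝ (Fin N),
          (∃ K : NNReal, LipschitzOnWith K Γ₁ (Set.Icc 0 1)) →
          (∃ K : NNReal, LipschitzOnWith K Γ₂ (Set.Icc 0 1)) →
          oneVariation Γ₁ ≤ ENNReal.ofReal L →
          oneVariation Γ₂ ≤ ENNReal.ofReal L →
          Real.sqrt (∑ I : Fin k → Fin N, (sig Γ₁ I - sig Γ₂ I) ^ 2) ≤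
            C * L ^ (k - 1) * (oneVariation (Γ₁ - Γ₂)).toReal := by
  refine ⟨k, by exact_mod_cast hk, fun N _ L hL Γ₁ Γ₂ ⟨K₁, hK₁⟩ ⟨K₂, hK₂⟩ hV₁ hV₂ => ?_⟩
  have hbv : ∀ {Γ : ℝ → EuclideanSpace ℝ (Fin N)} {K : NNReal},
      LipschitzOnWith K Γ (Icc 0 1) → BoundedVariationOn Γ (Icc 0 1) := fun hΓ => by
    simpa using hΓ.locallyBoundedVariationOn 0 1 (by simp) (by simp)
  have hbv₁ := hbv hK₁
  have hbv₂ := hbv hK₂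
  rw [sqrt_sum_sq_sig_sub_sig, sigLevel_eq_setIntegral hbv₁, sigLevel_eq_setIntegral hbv₂]
  refine norm_setIntegral_tensorProd_sub_le (simplexSet_subset_pi_Icc k) (measurable_deriv _)
    (measurable_deriv _) hbv₁.integrableOn_deriv hbv₂.integrableOn_deriv
    (hbv₁.setIntegral_norm_deriv_le.trans (ENNReal.toReal_le_of_le_ofReal hL.le hV₁))
    (hbv₂.setIntegral_norm_deriv_le.trans (ENNReal.toReal_le_of_le_ofReal hL.le hV₂)) ?_
  calc ∫ s in Icc 0 1, ‖deriv Γ₁ s - deriv Γ₂ s‖ = ∫ s in Icc 0 1, ‖deriv (Γ₁ - Γ₂) s‖ := by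
        refine integral_congr_ae ?_
        filter_upwards [hbv₁.ae_restrict_differentiableAt, hbv₂.ae_restrict_differentiableAt]
          with s h₁ h₂
        rw [deriv_sub h₁ h₂]
    _ ≤ (oneVariation (Γ₁ - Γ₂)).toReal := (hbv (hK₁.sub hK₂)).setIntegral_norm_deriv_le
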